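/- Let λ > 1, R < log₂ λ, ε₁ = λ^{1/R} − 2 > 0, γ > 0, and S : ℕ → {−1,+1}. Define X̌_t = γ·λ^t·Σ_{k=0}^{⌊Rt⌋} (2+ε₁)^{-k} S_k and W_t = X̌_{t+1} − λ·X̌_t. Then |W_t| < γ·λ^{1+1/R} for all t ≥ 0. In particular, choosing γ = Ω/(2·λ^{1+1/R}) gives |W_t| ≤ Ω/2. -/

import Mathlib

/-!
Between times `t` and `t + 1` the encoder appends the digits `⌊Rt⌋ + 1, …, ⌊R(t+1)⌋` of
the stream, so `W t = γ λ^{t+1} ∑_{k = ⌊Rt⌋+1}^{⌊R(t+1)⌋} q^{-k} S_k` with `q = 2 + ε₁`.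
Since `q > 2`, this tail of digits `±1` is smaller than `q^{-⌊Rt⌋}`, and because
`q^R = λ` and `⌊Rt⌋ > Rt - 1`, the factor `λ^{t+1} q^{-⌊Rt⌋}` is at most `λ^{1 + 1/R}`.
-/

open Finset Real

lemma abs_sum_Ico_inv_pow_mul_lt {q : ℝ} (hq : 2 < q) {s : ℕ → ℝ} (hs : ∀ k, |s k| ≤ 1)
    (m n : ℕ) : |∑ k ∈ Ico (m + 1) n, (q ^ k)⁻¹ * s k| < (q ^ m)⁻¹ := by
  have hq₀ : 0 < q := by linarith
  have hq₁ : q⁻¹ < 1 := inv_lt_one_of_one_lt₀ (by linarith)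
  calc |∑ k ∈ Ico (m + 1) n, (q ^ k)⁻¹ * s k|
      ≤ ∑ k ∈ Ico (m + 1) n, q⁻¹ ^ k := by
        refine (abs_sum_le_sum_abs _ _).trans (sum_le_sum fun k _ => ?_)
        rw [abs_mul, abs_of_pos (by positivity), inv_pow]
        exact mul_le_of_le_one_right (by positivity) (hs k)
    _ ≤ q⁻¹ ^ (m + 1) / (1 - q⁻¹) := geom_sum_Ico_le_of_lt_one (by positivity) hq₁
    _ = (q ^ m)⁻¹ / (q - 1) := by
        rw [inv_pow, pow_succ]
        field_simp
    _ < (q ^ m)⁻¹ := div_lt_self (by positivity) (by linarith)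

lemma pow_succ_mul_inv_rpow_pow_floor_le {lam R : ℝ} (hlam : 1 < lam) (hR : 0 < R)
    (t : ℕ) : lam ^ (t + 1) * ((lam ^ (1 / R)) ^ ⌊R * t⌋₊)⁻¹ ≤ lam ^ (1 + 1 / R) := by
  have hlam₀ : 0 < lam := by linarith
  have hfloor : R * t < ⌊R * t⌋₊ + 1 := Nat.lt_floor_add_one _
  have hexp : (t + 1 : ℝ) - ⌊R * t⌋₊ / R ≤ 1 + 1 / R := by
    have ht : (t : ℝ) ≤ (⌊R * t⌋₊ + 1) / R := by
      rw [le_div_iff₀ hR]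
      linarith
    rw [add_div] at ht
    linarith
  calc lam ^ (t + 1) * ((lam ^ (1 / R)) ^ ⌊R * t⌋₊)⁻¹
      = lam ^ ((t + 1 : ℝ) - ⌊R * t⌋₊ / R) := by
        rw [← rpow_natCast, ← rpow_natCast, ← rpow_mul hlam₀.le, ← rpow_neg hlam₀.le,
          ← rpow_add hlam₀]
        congr 1
        push_cast
        ring
    _ ≤ lam ^ (1 + 1 / R) := rpow_le_rpow_of_exponent_le hlam.le hexp

theorem stmt_4_general (lam R ε₁ γ Om : ℝ) (hlam : 1 < lam) (hR : 0 < R)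
    (hε : ε₁ = lam ^ (1 / R) - 2) (hε₁ : 0 < ε₁) (hγ : 0 < γ)
    (S : ℕ → ℝ) (hS : ∀ k, S k = 1 ∨ S k = -1)
    (Xc W : ℕ → ℝ)
    (hXc : ∀ t, Xc t =
      γ * lam ^ (t : ℕ) * ∑ k ∈ range (⌊R * t⌋₊ + 1), ((2 + ε₁) ^ k)⁻¹ * S k)
    (hWdef : ∀ t, W t = Xc (t + 1) - lam * Xc t) :
    (∀ t, |W t| < γ * lam ^ (1 + 1 / R)) ∧
      (γ = Om / (2 * lam ^ (1 + 1 / R)) → ∀ t, |W t| ≤ Om / 2) := by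
  have hS₁ : ∀ k, |S k| ≤ 1 := fun k => by rcases hS k with h | h <;> simp [h]
  have hbound : ∀ t, |W t| < γ * lam ^ (1 + 1 / R) := by
    intro t
    have hmono : ⌊R * t⌋₊ ≤ ⌊R * ↑(t + 1)⌋₊ := Nat.floor_le_floor (by gcongr; simp)
    have hW : W t = γ * lam ^ (t + 1) *
        ∑ k ∈ Ico (⌊R * t⌋₊ + 1) (⌊R * ↑(t + 1)⌋₊ + 1), ((2 + ε₁) ^ k)⁻¹ * S k := by
      rw [hWdef, hXc, hXc, sum_Ico_eq_sub _ (Nat.succ_le_succ hmono)]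
      ring
    calc |W t| = γ * lam ^ (t + 1) *
          |∑ k ∈ Ico (⌊R * t⌋₊ + 1) (⌊R * ↑(t + 1)⌋₊ + 1), ((2 + ε₁) ^ k)⁻¹ * S k| := by
          rw [hW, abs_mul, abs_of_pos (by positivity)]
      _ < γ * lam ^ (t + 1) * ((2 + ε₁) ^ ⌊R * t⌋₊)⁻¹ := by
          gcongr
          exact abs_sum_Ico_inv_pow_mul_lt (by linarith) hS₁ _ _
      _ ≤ γ * lam ^ (1 + 1 / R) := by
          rw [mul_assoc, show 2 + ε₁ = lam ^ (1 / R) by rw [hε]; ring]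
          gcongr
          exact pow_succ_mul_inv_rpow_pow_floor_le hlam hR t
  refine ⟨hbound, fun hγOm t => (hbound t).le.trans_eq ?_⟩
  rw [hγOm]
  field_simp

/-- Boundedness of the simulated disturbance in the anytime-encoding
construction. -/
theorem stmt_4 (lam R ε₁ γ Om : ℝ) (hlam : 1 < lam) (hR : 0 < R)
    (hRlog : R < Real.logb 2 lam)
    (hε : ε₁ = lam ^ (1 / R) - 2) (hε₁ : 0 < ε₁) (hγ : 0 < γ)
    (S : ℕ → ℝ) (hS : ∀ k, S k = 1 ∨ S k = -1)
    (Xc W : ℕ → ℝ)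
    (hXc : ∀ t, Xc t =
      γ * lam ^ (t : ℕ) * ∑ k ∈ range (⌊R * t⌋₊ + 1), ((2 + ε₁) ^ k)⁻¹ * S k)
    (hWdef : ∀ t, W t = Xc (t + 1) - lam * Xc t) :
    (∀ t, |W t| < γ * lam ^ (1 + 1 / R)) ∧
      (γ = Om / (2 * lam ^ (1 + 1 / R)) → ∀ t, |W t| ≤ Om / 2) :=
  stmt_4_general lam R ε₁ γ Om hlam hR hε hε₁ hγ S hS Xc W hXc hWdef
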